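/- arXiv:1804.05715 — 6 statements merged into one kernel-verified Lean document; each statement's English description precedes it below -/
import Mathlib

section
/- Crossing monotonicity: for x ∈ ℤ² and y, z ∈ ℤ² with x + e₁ + e₂ ≤ y, x + e₁ + e₂ ≤ z, |y|₁ = |z|₁, and y·e₁ < z·e₁, one has G(x,y) − G(x+e₁,y) ≥ G(x,z) − G(x+e₁,z). -/
/-!
A path `π` from `x` to `z` and a path `π'` from `x + e₁` to `y` must meet, since `π` starts to the
left of `π'` but ends to the right of it. Exchanging their tails after the meeting point yields a
path from `x` to `y` and a path from `x + e₁` to `z` with the same total weight. Taking suprema,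
`G(x,z) + G(x+e₁,y) ≤ G(x,y) + G(x+e₁,z)`.
-/

/-- An up-right path of length `n`: each step is `e₁` or `e₂`. -/
def UpRight (p : ℕ → ℤ × ℤ) (n : ℕ) : Prop :=
  ∀ i, i < n → p (i + 1) = p i + (1, 0) ∨ p (i + 1) = p i + (0, 1)

/-- Last-passage time from `x` to `y`, omitting the weight at the terminal point. -/
noncomputable def G (ω : ℤ × ℤ → ℝ) (x y : ℤ × ℤ) : ℝ :=
  sSup {s : ℝ | ∃ (n : ℕ) (p : ℕ → ℤ × ℤ), p 0 = x ∧ p n = y ∧ UpRight p n ∧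
    (n : ℤ) = (y.1 - x.1) + (y.2 - x.2) ∧ s = ∑ i ∈ Finset.range n, ω (p i)}

open Finset
open scoped Pointwise

theorem exists_eq_zero_of_succ_le_add_one {f : ℕ → ℤ} {m : ℕ} (h0 : f 0 ≤ 0) (hm : 0 ≤ f m)
    (hstep : ∀ t < m, f (t + 1) ≤ f t + 1) : ∃ t ≤ m, f t = 0 := by
  induction m with
  | zero => exact ⟨0, le_rfl, le_antisymm h0 hm⟩
  | succ m ih =>
    by_cases hfm : 0 ≤ f m
    · obtain ⟨t, ht, hft⟩ := ih hfm fun t ht => hstep t (by omega)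
      exact ⟨t, by omega, hft⟩
    · exact ⟨m + 1, le_rfl, by linarith [hstep m (by omega)]⟩

variable {p q : ℕ → ℤ × ℤ} {m n i j : ℕ}

theorem UpRight.mono (h : UpRight p n) (hmn : m ≤ n) : UpRight p m :=
  fun i hi => h i (hi.trans_le hmn)

theorem UpRight.shift (h : UpRight p (j + n)) : UpRight (fun k => p (j + k)) n :=
  fun i hi => by simpa only [← add_assoc] using h (j + i) (by omega)

theorem UpRight.le_succ (h : UpRight p n) (hi : i < n) : p i ≤ p (i + 1) := by
  rcases h i hi with h' | h' <;> rw [h'] <;> exact ⟨by simp, by simp⟩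

theorem UpRight.fst_succ_le (h : UpRight p n) (hi : i < n) : (p (i + 1)).1 ≤ (p i).1 + 1 := by
  rcases h i hi with h' | h' <;> simp [h']

theorem UpRight.le_of_le (h : UpRight p n) (hij : i ≤ j) (hj : j ≤ n) : p i ≤ p j := by
  induction j, hij using Nat.le_induction with
  | base => exact le_rfl
  | succ k _ ih => exact (ih (by omega)).trans (h.le_succ (by omega))

theorem UpRight.fst_add_snd (h : UpRight p n) (hi : i ≤ n) :
    (p i).1 + (p i).2 = (p 0).1 + (p 0).2 + i := by
  induction i with
  | zero => simp
  | succ k ih =>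
    have := ih (by omega)
    rcases h k (by omega) with h' | h' <;>
      simp only [h', Prod.fst_add, Prod.snd_add] <;> push_cast <;> omega

theorem upRight_east (x : ℤ × ℤ) (n : ℕ) : UpRight (fun k : ℕ => x + ((k : ℤ), 0)) n :=
  fun i _ => Or.inl (by ext <;> simp [add_assoc])

theorem upRight_north (x : ℤ × ℤ) (n : ℕ) : UpRight (fun k : ℕ => x + (0, (k : ℤ))) n :=
  fun i _ => Or.inr (by ext <;> simp [add_assoc])

def pathConcat (p : ℕ → ℤ × ℤ) (i : ℕ) (q : ℕ → ℤ × ℤ) : ℕ → ℤ × ℤ :=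
  fun k => if k ≤ i then p k else q (k - i)

@[simp]
theorem pathConcat_zero : pathConcat p i q 0 = p 0 := by
  simp [pathConcat]

theorem pathConcat_add (h : p i = q 0) (k : ℕ) : pathConcat p i q (i + k) = q k := by
  rcases k with _ | k
  · simp [pathConcat, h]
  · simp [pathConcat]

theorem upRight_pathConcat (hp : UpRight p i) (hq : UpRight q n) (h : p i = q 0) :
    UpRight (pathConcat p i q) (i + n) := by
  intro k hk
  rcases lt_or_ge k i with hki | hki
  · simpa only [pathConcat, if_pos hki.le, if_pos (Nat.succ_le_of_lt hki)] using hp k hki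
  · obtain ⟨l, rfl⟩ := Nat.exists_eq_add_of_le hki
    simpa only [add_assoc, pathConcat_add h] using hq l (by omega)

theorem exists_upRight {x y : ℤ × ℤ} (hxy : x ≤ y) : ∃ n p, p 0 = x ∧ p n = y ∧ UpRight p n := by
  obtain ⟨a, ha⟩ := Int.eq_ofNat_of_zero_le (sub_nonneg.2 hxy.1)
  obtain ⟨b, hb⟩ := Int.eq_ofNat_of_zero_le (sub_nonneg.2 hxy.2)
  have hcorner : x + ((a : ℤ), 0) = x + ((a : ℤ), 0) + (0, ((0 : ℕ) : ℤ)) := by simp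
  refine ⟨a + b,
    pathConcat (fun k : ℕ => x + ((k : ℤ), 0)) a (fun k : ℕ => x + ((a : ℤ), 0) + (0, (k : ℤ))),
    by simp, ?_, upRight_pathConcat (upRight_east x a) (upRight_north _ b) hcorner⟩
  rw [pathConcat_add hcorner]
  ext <;> simp only [Prod.fst_add, Prod.snd_add, add_zero] <;> omega

def pathWeight (ω : ℤ × ℤ → ℝ) (p : ℕ → ℤ × ℤ) (n : ℕ) : ℝ :=
  ∑ k ∈ range n, ω (p k)

theorem pathWeight_add (ω : ℤ × ℤ → ℝ) (p : ℕ → ℤ × ℤ) (m n : ℕ) :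
    pathWeight ω p (m + n) = pathWeight ω p m + pathWeight ω (fun k => p (m + k)) n :=
  sum_range_add _ m n

theorem pathWeight_pathConcat (ω : ℤ × ℤ → ℝ) (h : p i = q 0) :
    pathWeight ω (pathConcat p i q) (i + n) = pathWeight ω p i + pathWeight ω q n := by
  rw [pathWeight_add]
  congr 1
  · exact sum_congr rfl fun k hk => by simp [pathConcat, (mem_range.1 hk).le]
  · simp only [pathConcat_add h]

-- `G ω x y = sSup (pathWeights ω x y)` holds by `rfl`.
def pathWeights (ω : ℤ × ℤ → ℝ) (x y : ℤ × ℤ) : Set ℝ :=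
  {s | ∃ (n : ℕ) (p : ℕ → ℤ × ℤ), p 0 = x ∧ p n = y ∧ UpRight p n ∧
    (n : ℤ) = (y.1 - x.1) + (y.2 - x.2) ∧ s = pathWeight ω p n}

theorem pathWeight_mem_pathWeights (ω : ℤ × ℤ → ℝ) (hp : UpRight p n) :
    pathWeight ω p n ∈ pathWeights ω (p 0) (p n) :=
  ⟨n, p, rfl, rfl, hp, by linarith [hp.fst_add_snd le_rfl], rfl⟩

theorem pathWeights_nonempty (ω : ℤ × ℤ → ℝ) {x y : ℤ × ℤ} (hxy : x ≤ y) :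
    (pathWeights ω x y).Nonempty := by
  obtain ⟨n, p, rfl, rfl, hp⟩ := exists_upRight hxy
  exact ⟨_, pathWeight_mem_pathWeights ω hp⟩

theorem pathWeights_bddAbove (ω : ℤ × ℤ → ℝ) (x y : ℤ × ℤ) : BddAbove (pathWeights ω x y) := by
  refine ⟨((y.1 - x.1) + (y.2 - x.2)).toNat • ∑ w ∈ Icc x y, |ω w|, ?_⟩
  rintro _ ⟨n, p, rfl, rfl, hp, hn, rfl⟩
  rw [show ((p n).1 - (p 0).1 + ((p n).2 - (p 0).2)).toNat = n by omega]
  refine (sum_le_card_nsmul _ _ _ fun k hk => ?_).trans_eq (by rw [card_range])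
  have hk : k < n := mem_range.1 hk
  exact (le_abs_self _).trans <| single_le_sum (f := fun w => |ω w|) (fun _ _ => abs_nonneg _)
    (mem_Icc.2 ⟨hp.le_of_le (Nat.zero_le k) hk.le, hp.le_of_le hk.le le_rfl⟩)

theorem UpRight.exists_crossing (hp : UpRight p (n + 1)) (hq : UpRight q n)
    (hq0 : q 0 = p 0 + (1, 0)) (hend : (q n).1 ≤ (p (n + 1)).1) : ∃ j ≤ n, p (j + 1) = q j := by
  -- The horizontal gap between the points of `p` and `q` on a common antidiagonal starts `≤ 0`,
  -- ends `≥ 0` and grows by at most one per step.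
  have h0 : (p 1).1 ≤ (q 0).1 := by simpa [hq0] using hp.fst_succ_le (i := 0) (by omega)
  obtain ⟨j, hj, hfst⟩ := exists_eq_zero_of_succ_le_add_one (f := fun t => (p (t + 1)).1 - (q t).1)
    (by simpa using h0) (by simpa using hend) fun t ht => by
      have := hp.fst_succ_le (i := t + 1) (by omega)
      have := (hq.le_succ ht).1
      omega
  have hpj := hp.fst_add_snd (i := j + 1) (by omega)
  have hqj := hq.fst_add_snd hj
  rw [hq0] at hqj
  simp only [Prod.fst_add, Prod.snd_add] at hfst hqj
  push_cast at hpj hqj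
  exact ⟨j, hj, Prod.ext (by omega) (by omega)⟩

theorem pathWeights_add_subset (ω : ℤ × ℤ → ℝ) {x y z : ℤ × ℤ} (hsum : y.1 + y.2 = z.1 + z.2)
    (hle : y.1 ≤ z.1) :
    pathWeights ω x z + pathWeights ω (x + (1, 0)) y ⊆
      pathWeights ω x y + pathWeights ω (x + (1, 0)) z := by
  rintro _ ⟨_, ⟨n', p, rfl, rfl, hp, hn', rfl⟩, _, ⟨n, q, hq0, rfl, hq, hn, rfl⟩, rfl⟩
  obtain rfl : n' = n + 1 := by simp only [Prod.fst_add, Prod.snd_add] at hn; omega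
  obtain ⟨j, hj, hcross⟩ := hp.exists_crossing hq hq0 hle
  obtain ⟨l, rfl⟩ := Nat.exists_eq_add_of_le hj
  rw [add_right_comm] at hp ⊢
  -- Exchange the tails of `p` and `q` after their common point `p (j + 1) = q j`.
  have hr := upRight_pathConcat (hp.mono (by omega)) hq.shift hcross
  have hr' := upRight_pathConcat (hq.mono (by omega)) hp.shift hcross.symm
  have hmem := pathWeight_mem_pathWeights ω hr
  have hmem' := pathWeight_mem_pathWeights ω hr'
  simp only [pathConcat_zero, pathConcat_add (q := fun k => q (j + k)) hcross,
    pathConcat_add (q := fun k => p (j + 1 + k)) hcross.symm, hq0] at hmem hmem'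
  refine Set.mem_add.2 ⟨_, hmem, _, hmem', ?_⟩
  rw [pathWeight_pathConcat ω (q := fun k => q (j + k)) hcross,
    pathWeight_pathConcat ω (q := fun k => p (j + 1 + k)) hcross.symm,
    pathWeight_add ω p (j + 1), pathWeight_add ω q j]
  ring

theorem sSup_add_sSup_le_of_add_subset {A B C D : Set ℝ} (hA : A.Nonempty) (hB : B.Nonempty)
    (hC : BddAbove C) (hD : BddAbove D) (h : A + B ⊆ C + D) :
    sSup A + sSup B ≤ sSup C + sSup D := by
  suffices ∀ a ∈ A, ∀ b ∈ B, a + b ≤ sSup C + sSup D by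
    have := csSup_le hA fun a ha => le_sub_iff_add_le.2 <| le_sub_iff_add_le'.1 <|
      csSup_le hB fun b hb => le_sub_iff_add_le'.2 (this a ha b hb)
    linarith
  intro a ha b hb
  obtain ⟨c, hc, d, hd, hcd⟩ := h (Set.add_mem_add ha hb)
  rw [← hcd]
  exact add_le_add (le_csSup hC hc) (le_csSup hD hd)

/-- Crossing monotonicity of last-passage gradients. -/
theorem crossing_monotonicity (ω : ℤ × ℤ → ℝ) (x y z : ℤ × ℤ)
    (hy : x + (1, 1) ≤ y) (hz : x + (1, 1) ≤ z)
    (hsum : y.1 + y.2 = z.1 + z.2) (hlt : y.1 < z.1) :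
    G ω x y - G ω (x + (1, 0)) y ≥ G ω x z - G ω (x + (1, 0)) z := by
  have hxz : x ≤ z := (le_add_of_nonneg_right (by decide : (0 : ℤ × ℤ) ≤ (1, 1))).trans hz
  have hx1y : x + (1, 0) ≤ y :=
    (add_le_add_right (by decide : ((1, 0) : ℤ × ℤ) ≤ (1, 1)) x).trans hy
  have key : G ω x z + G ω (x + (1, 0)) y ≤ G ω x y + G ω (x + (1, 0)) z :=
    sSup_add_sSup_le_of_add_subset (pathWeights_nonempty ω hxz) (pathWeights_nonempty ω hx1y)
      (pathWeights_bddAbove ω x y) (pathWeights_bddAbove ω (x + (1, 0)) z)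
      (pathWeights_add_subset ω hsum hlt.le)
  linarith
end

section
/- Under the hypotheses of the previous statement (B a cocycle satisfying recovery, and x₀,x₁,… following minimal B-gradients), one moreover has G(x_m, x_n) = B(x_m, x_n) for all 0 ≤ m ≤ n. -/
/-! The weight `ω x` is at most the cocycle increment of either admissible step out of `x`, so
the cocycle telescopes to an upper bound for the weight of every up-right path; a path that always
takes a minimising step attains the bound, and hence realises the last-passage time. -/

theorem cocycle_sum_range {α : Type*} (B : α → α → ℝ) (hcoc : ∀ x y z, B x y + B y z = B x z)
    (q : ℕ → α) (k : ℕ) :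
    ∑ i ∈ Finset.range k, B (q i) (q (i + 1)) = B (q 0) (q k) := by
  induction k with
  | zero => simpa [eq_comm] using hcoc (q 0) (q 0) (q 0)
  | succ k ih => rw [Finset.sum_range_succ, ih, hcoc]

namespace UpRight

variable {q : ℕ → ℤ × ℤ} {k : ℕ}

theorem mono_s6 {l : ℕ} (h : UpRight q k) (hlk : l ≤ k) : UpRight q l :=
  fun i hi => h i (hi.trans_le hlk)

theorem length_eq (h : UpRight q k) :
    (k : ℤ) = ((q k).1 - (q 0).1) + ((q k).2 - (q 0).2) := by
  induction k with
  | zero => simp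
  | succ k ih =>
    have ih := ih (h.mono_s6 k.le_succ)
    rcases h k k.lt_succ_self with hstep | hstep <;>
      · rw [hstep, Prod.fst_add, Prod.snd_add]; push_cast; linarith

theorem sum_le_cocycle {ω : ℤ × ℤ → ℝ} {B : ℤ × ℤ → ℤ × ℤ → ℝ}
    (hcoc : ∀ x y z, B x y + B y z = B x z)
    (hω : ∀ x, ω x ≤ min (B x (x + (1, 0))) (B x (x + (0, 1)))) (h : UpRight q k) :
    ∑ i ∈ Finset.range k, ω (q i) ≤ B (q 0) (q k) := by
  rw [← cocycle_sum_range B hcoc q k]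
  refine Finset.sum_le_sum fun i hi => ?_
  rcases h i (Finset.mem_range.mp hi) with hstep | hstep <;> rw [hstep]
  · exact (hω _).trans (min_le_left _ _)
  · exact (hω _).trans (min_le_right _ _)

end UpRight

theorem G_eq_cocycle_of_upRight {ω : ℤ × ℤ → ℝ} {B : ℤ × ℤ → ℤ × ℤ → ℝ}
    (hcoc : ∀ x y z, B x y + B y z = B x z)
    (hω : ∀ x, ω x ≤ min (B x (x + (1, 0))) (B x (x + (0, 1))))
    {q : ℕ → ℤ × ℤ} {k : ℕ} (hq : UpRight q k)
    (hmin : ∀ i < k, ω (q i) = B (q i) (q (i + 1))) :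
    G ω (q 0) (q k) = B (q 0) (q k) := by
  refine IsGreatest.csSup_eq ⟨⟨k, q, rfl, rfl, hq, hq.length_eq, ?_⟩, ?_⟩
  · rw [← cocycle_sum_range B hcoc q k]
    exact (Finset.sum_congr rfl fun i hi => hmin i (Finset.mem_range.mp hi)).symm
  · rintro s ⟨l, r, hr0, hrl, hr, -, rfl⟩
    rw [← hr0, ← hrl]
    exact hr.sum_le_cocycle hcoc hω

/-- Along a path following the minimal gradient of a recovering cocycle,
passage times agree with the cocycle. -/
theorem lpp_eq_cocycle_on_path (ω : ℤ × ℤ → ℝ) (B : ℤ × ℤ → ℤ × ℤ → ℝ)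
    (hcoc : ∀ x y z : ℤ × ℤ, B x y + B y z = B x z)
    (hrec : ∀ x : ℤ × ℤ, ω x = min (B x (x + (1, 0))) (B x (x + (0, 1))))
    (p : ℕ → ℤ × ℤ)
    (hpath : ∀ i : ℕ, p (i + 1) = p i + (1, 0) ∨ p (i + 1) = p i + (0, 1))
    (hmin : ∀ i : ℕ, ω (p i) = B (p i) (p (i + 1))) :
    ∀ m n : ℕ, m ≤ n → G ω (p m) (p n) = B (p m) (p n) := by
  intro m n hmn
  obtain ⟨k, rfl⟩ := Nat.exists_eq_add_of_le hmn
  have hshift : UpRight (fun i => p (m + i)) k := fun i _ => hpath (m + i)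
  exact G_eq_cocycle_of_upRight hcoc (fun x => (hrec x).le) hshift fun i _ => hmin (m + i)
end

section
/- Recovery implies domination: if B is a cocycle on ℤ² with ω(x) = min(B(x,x+e₁), B(x,x+e₂)) for all x, then G(x,y) ≤ B(x,y) for all x ≤ y coordinatewise. -/
theorem sum_range_cocycle_eq {α : Type*} (B : α → α → ℝ)
    (hcoc : ∀ x y z, B x y + B y z = B x z) (p : ℕ → α) (n : ℕ) :
    ∑ i ∈ Finset.range n, B (p i) (p (i + 1)) = B (p 0) (p n) := by
  -- `B` is the coboundary of `B (p 0) ·`.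
  have hB : ∀ x y, B x y = B (p 0) y - B (p 0) x := fun x y => by linarith [hcoc (p 0) x y]
  rw [Finset.sum_congr rfl fun i _ => hB (p i) (p (i + 1)),
    Finset.sum_range_sub (fun i => B (p 0) (p i)), hB (p 0) (p 0), sub_self, sub_zero]

theorem UpRight.sum_le_cocycle_s7 {ω : ℤ × ℤ → ℝ} {B : ℤ × ℤ → ℤ × ℤ → ℝ}
    (hcoc : ∀ x y z, B x y + B y z = B x z)
    (hω : ∀ x, ω x ≤ min (B x (x + (1, 0))) (B x (x + (0, 1))))
    {p : ℕ → ℤ × ℤ} {n : ℕ} (hp : UpRight p n) :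
    ∑ i ∈ Finset.range n, ω (p i) ≤ B (p 0) (p n) := by
  rw [← sum_range_cocycle_eq B hcoc p n]
  refine Finset.sum_le_sum fun i hi => (hω (p i)).trans ?_
  rcases hp i (Finset.mem_range.mp hi) with h | h <;> rw [h]
  exacts [min_le_left _ _, min_le_right _ _]

theorem exists_upRight_of_le {x y : ℤ × ℤ} (hxy : x ≤ y) :
    ∃ (n : ℕ) (p : ℕ → ℤ × ℤ), p 0 = x ∧ p n = y ∧ UpRight p n ∧
      (n : ℤ) = (y.1 - x.1) + (y.2 - x.2) := by
  obtain ⟨h₁, h₂⟩ := Prod.le_def.mp hxy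
  obtain ⟨a, ha⟩ := Int.eq_ofNat_of_zero_le (sub_nonneg.mpr h₁)
  obtain ⟨b, hb⟩ := Int.eq_ofNat_of_zero_le (sub_nonneg.mpr h₂)
  -- the staircase: `a` steps `e₁`, then `b` steps `e₂`
  refine ⟨a + b, fun i => (x.1 + min (i : ℤ) a, x.2 + max ((i : ℤ) - a) 0), ?_, ?_, ?_, ?_⟩
  · ext <;> simp
  · ext <;> push_cast <;> omega
  · intro i _
    by_cases h : (i : ℤ) < a
    · left; ext <;> simp only [Prod.fst_add, Prod.snd_add] <;> push_cast <;> omega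
    · right; ext <;> simp only [Prod.fst_add, Prod.snd_add] <;> push_cast <;> omega
  · push_cast; omega

/-- A recovering cocycle dominates the last-passage time. -/
theorem lpp_le_cocycle (ω : ℤ × ℤ → ℝ) (B : ℤ × ℤ → ℤ × ℤ → ℝ)
    (hcoc : ∀ x y z : ℤ × ℤ, B x y + B y z = B x z)
    (hrec : ∀ x : ℤ × ℤ, ω x = min (B x (x + (1, 0))) (B x (x + (0, 1)))) :
    ∀ x y : ℤ × ℤ, x ≤ y → G ω x y ≤ B x y := by
  intro x y hxy
  obtain ⟨n, p, hp0, hpn, hp, hn⟩ := exists_upRight_of_le hxy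
  refine csSup_le ⟨_, n, p, hp0, hpn, hp, hn, rfl⟩ ?_
  rintro s ⟨m, q, rfl, rfl, hq, -, rfl⟩
  exact hq.sum_le_cocycle_s7 hcoc fun z => (hrec z).le
end

section
/- Existence of semi-infinite geodesics: for any weight configuration ω : ℤ² → ℝ and any x ∈ ℤ², there exists an infinite up-right path x₀ = x, x₁, x₂, … such that every finite segment x_m,…,x_n is a geodesic, i.e., ∑_{i=m}^{n−1} ω(x_i) = G(x_m, x_n). -/
open Filter Topology Finset

def step (b : Bool) : ℤ × ℤ := if b then (1, 0) else (0, 1)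

def stepPath (x : ℤ × ℤ) (σ : ℕ → Bool) (i : ℕ) : ℤ × ℤ :=
  x + ∑ j ∈ range i, step (σ j)

section stepPath

variable (x : ℤ × ℤ) (σ : ℕ → Bool)

@[simp]
lemma stepPath_zero : stepPath x σ 0 = x := by simp [stepPath]

lemma stepPath_succ (i : ℕ) : stepPath x σ (i + 1) = stepPath x σ i + step (σ i) := by
  simp [stepPath, sum_range_succ, add_assoc]

lemma stepPath_succ_eq_or (i : ℕ) :
    stepPath x σ (i + 1) = stepPath x σ i + (1, 0) ∨
      stepPath x σ (i + 1) = stepPath x σ i + (0, 1) := by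
  rw [stepPath_succ, step]
  split <;> simp

lemma upRight_stepPath (n : ℕ) : UpRight (stepPath x σ) n :=
  fun i _ => stepPath_succ_eq_or x σ i

lemma stepPath_add (m i : ℕ) :
    stepPath x σ (m + i) = stepPath (stepPath x σ m) (fun j => σ (m + j)) i := by
  simp [stepPath, sum_range_add, add_assoc]

lemma stepPath_fst_add_snd (i : ℕ) :
    (stepPath x σ i).1 + (stepPath x σ i).2 = x.1 + x.2 + i := by
  have hstep : ∀ b, (step b).1 + (step b).2 = 1 := by decide
  simp only [stepPath, Prod.fst_add, Prod.snd_add, Prod.fst_sum, Prod.snd_sum]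
  rw [add_add_add_comm, ← sum_add_distrib]
  simp [hstep]

variable {x σ} in
lemma stepPath_congr {τ : ℕ → Bool} {k i : ℕ} (h : ∀ j < k, σ j = τ j) (hi : i ≤ k) :
    stepPath x σ i = stepPath x τ i := by
  unfold stepPath
  congr 1
  exact sum_congr rfl fun j hj => by rw [h j (by simp at hj; omega)]

end stepPath

lemma step_decide_eq_sub {p q : ℤ × ℤ} (h : q = p + (1, 0) ∨ q = p + (0, 1)) :
    step (decide (q = p + (1, 0))) = q - p := by
  rcases h with rfl | rfl
  · simp [step]
  · simp [step, Prod.ext_iff]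

/-- Telescoping: `p i = p 0 + ∑ j < i, (p (j + 1) - p j)`. -/
lemma UpRight.exists_eq_stepPath {p : ℕ → ℤ × ℤ} {n : ℕ} (h : UpRight p n) :
    ∃ σ, ∀ i ≤ n, p i = stepPath (p 0) σ i := by
  refine ⟨fun j => decide (p (j + 1) = p j + (1, 0)), fun i hi => ?_⟩
  have hsteps : ∀ j ∈ range i, step (decide (p (j + 1) = p j + (1, 0))) = p (j + 1) - p j :=
    fun j hj => step_decide_eq_sub (h j (by simp at hj; omega))
  rw [stepPath, sum_congr rfl hsteps, sum_range_sub]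
  abel

/-- The set whose supremum defines `G ω x y`. -/
def pathSums (ω : ℤ × ℤ → ℝ) (x y : ℤ × ℤ) : Set ℝ :=
  {s : ℝ | ∃ (n : ℕ) (p : ℕ → ℤ × ℤ), p 0 = x ∧ p n = y ∧ UpRight p n ∧
    (n : ℤ) = (y.1 - x.1) + (y.2 - x.2) ∧ s = ∑ i ∈ range n, ω (p i)}

section pathSums

variable {ω : ℤ × ℤ → ℝ} {x y z : ℤ × ℤ}

lemma mem_pathSums_iff {s : ℝ} :
    s ∈ pathSums ω x y ↔
      ∃ (n : ℕ) (σ : ℕ → Bool), stepPath x σ n = y ∧ s = ∑ i ∈ range n, ω (stepPath x σ i) := by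
  constructor
  · rintro ⟨n, p, rfl, rfl, hp, -, rfl⟩
    obtain ⟨σ, hσ⟩ := hp.exists_eq_stepPath
    exact ⟨n, σ, (hσ n le_rfl).symm, sum_congr rfl fun i hi => by rw [hσ i (by simp at hi; omega)]⟩
  · rintro ⟨n, σ, rfl, rfl⟩
    refine ⟨n, stepPath x σ, stepPath_zero x σ, rfl, upRight_stepPath x σ n, ?_, rfl⟩
    linarith [stepPath_fst_add_snd x σ n]

variable (ω x y) in
lemma pathSums_finite : (pathSums ω x y).Finite := by
  let n := ((y.1 - x.1) + (y.2 - x.2)).toNat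
  let extend (τ : Fin n → Bool) (j : ℕ) : Bool := if h : j < n then τ ⟨j, h⟩ else false
  refine (Set.finite_range fun τ => ∑ i ∈ range n, ω (stepPath x (extend τ) i)).subset ?_
  rintro s hs
  obtain ⟨m, σ, hy, rfl⟩ := mem_pathSums_iff.1 hs
  obtain rfl : m = n := by have := stepPath_fst_add_snd x σ m; rw [hy] at this; omega
  refine ⟨fun j => σ j, sum_congr rfl fun i hi => ?_⟩
  exact congrArg ω (stepPath_congr (k := n) (fun j hj => by simp [extend, hj]) (mem_range.1 hi).le)

lemma le_G_of_mem_pathSums {s : ℝ} (hs : s ∈ pathSums ω x y) : s ≤ G ω x y :=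
  le_csSup (pathSums_finite ω x y).bddAbove hs

lemma G_mem_pathSums (h : (pathSums ω x y).Nonempty) : G ω x y ∈ pathSums ω x y :=
  h.csSup_mem (pathSums_finite ω x y)

variable (ω x) in
lemma sum_Ico_mem_pathSums (σ : ℕ → Bool) {m n : ℕ} (hmn : m ≤ n) :
    ∑ i ∈ Ico m n, ω (stepPath x σ i) ∈ pathSums ω (stepPath x σ m) (stepPath x σ n) := by
  refine mem_pathSums_iff.2 ⟨n - m, fun j => σ (m + j), ?_, ?_⟩
  · rw [← stepPath_add, Nat.add_sub_cancel' hmn]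
  · simp only [sum_Ico_eq_sum_range, stepPath_add]

lemma add_mem_pathSums {a b : ℝ} (ha : a ∈ pathSums ω x y) (hb : b ∈ pathSums ω y z) :
    a + b ∈ pathSums ω x z := by
  obtain ⟨n₁, σ₁, rfl, rfl⟩ := mem_pathSums_iff.1 ha
  obtain ⟨n₂, σ₂, rfl, rfl⟩ := mem_pathSums_iff.1 hb
  set σ : ℕ → Bool := fun j => if j < n₁ then σ₁ j else σ₂ (j - n₁)
  have hfirst : ∀ i ≤ n₁, stepPath x σ i = stepPath x σ₁ i :=
    fun i => stepPath_congr fun j hj => by simp [σ, hj]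
  have hsecond : ∀ i, stepPath x σ (n₁ + i) = stepPath (stepPath x σ₁ n₁) σ₂ i := by
    intro i
    rw [stepPath_add, hfirst n₁ le_rfl]
    simp [σ]
  refine mem_pathSums_iff.2 ⟨n₁ + n₂, σ, hsecond n₂, ?_⟩
  rw [sum_range_add]
  congr 1
  · exact sum_congr rfl fun i hi => by rw [hfirst i (by simp at hi; omega)]
  · simp only [hsecond]

lemma G_add_G_le (hxy : (pathSums ω x y).Nonempty) (hyz : (pathSums ω y z).Nonempty) :
    G ω x y + G ω y z ≤ G ω x z :=
  le_G_of_mem_pathSums (add_mem_pathSums (G_mem_pathSums hxy) (G_mem_pathSums hyz))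

end pathSums

section geodesic

variable {ω : ℤ × ℤ → ℝ} {x : ℤ × ℤ} {σ : ℕ → Bool}

lemma sum_Ico_eq_G_of_sum_range_eq_G {n : ℕ}
    (hgeo : ∑ i ∈ range n, ω (stepPath x σ i) = G ω x (stepPath x σ n)) {m k : ℕ}
    (hmk : m ≤ k) (hkn : k ≤ n) :
    ∑ i ∈ Ico m k, ω (stepPath x σ i) = G ω (stepPath x σ m) (stepPath x σ k) := by
  set p := stepPath x σ
  have h₁ := sum_Ico_mem_pathSums ω x σ (Nat.zero_le m)
  have h₂ := sum_Ico_mem_pathSums ω x σ hmk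
  have h₃ := sum_Ico_mem_pathSums ω x σ hkn
  have hsplit : ∑ i ∈ range n, ω (p i) =
      ∑ i ∈ Ico 0 m, ω (p i) + ∑ i ∈ Ico m k, ω (p i) + ∑ i ∈ Ico k n, ω (p i) := by
    rw [sum_Ico_consecutive _ (Nat.zero_le m) hmk, sum_Ico_consecutive _ (Nat.zero_le k) hkn,
      range_eq_Ico]
  have hsuper : G ω (p 0) (p m) + G ω (p m) (p k) + G ω (p k) (p n) ≤ G ω (p 0) (p n) := by
    linarith [G_add_G_le ⟨_, h₁⟩ ⟨_, h₂⟩, G_add_G_le ⟨_, add_mem_pathSums h₁ h₂⟩ ⟨_, h₃⟩]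
  simp only [stepPath_zero, p] at h₁ hsuper hsplit
  linarith [le_G_of_mem_pathSums h₁, le_G_of_mem_pathSums h₂, le_G_of_mem_pathSums h₃]

lemma sum_range_eq_G_of_eqOn {τ : ℕ → Bool} {k : ℕ} (hστ : ∀ j < k, σ j = τ j)
    (hgeo : ∑ i ∈ range k, ω (stepPath x σ i) = G ω x (stepPath x σ k)) :
    ∑ i ∈ range k, ω (stepPath x τ i) = G ω x (stepPath x τ k) := by
  rwa [← stepPath_congr hστ le_rfl,
    sum_congr rfl fun i hi => by rw [← stepPath_congr hστ (by simp at hi; omega)]]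

variable (ω x) in
lemma exists_sum_range_eq_G (n : ℕ) :
    ∃ σ : ℕ → Bool, ∑ i ∈ range n, ω (stepPath x σ i) = G ω x (stepPath x σ n) := by
  have hne := sum_Ico_mem_pathSums ω x (fun _ => true) (Nat.zero_le n)
  rw [stepPath_zero] at hne
  obtain ⟨m, σ, hy, hG⟩ := mem_pathSums_iff.1 (G_mem_pathSums ⟨_, hne⟩)
  obtain rfl : m = n := by
    have h₁ := stepPath_fst_add_snd x σ m
    have h₂ := stepPath_fst_add_snd x (fun _ => true) n
    rw [hy] at h₁
    omega
  exact ⟨σ, by rw [hy, hG]⟩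

lemma eventually_eqOn_nhds (τ : ℕ → Bool) (k : ℕ) : ∀ᶠ σ in 𝓝 τ, ∀ j < k, σ j = τ j :=
  (Set.finite_lt_nat k).eventually_all.2 fun j _ =>
    (continuous_apply j).continuousAt.eventually_mem (isOpen_discrete {τ j} |>.mem_nhds rfl)

variable (ω x) in
lemma exists_forall_sum_range_eq_G :
    ∃ σ : ℕ → Bool, ∀ k, ∑ i ∈ range k, ω (stepPath x σ i) = G ω x (stepPath x σ k) := by
  choose σs hσs using exists_sum_range_eq_G ω x
  obtain ⟨σ, hσ⟩ := exists_clusterPt_of_compactSpace (map σs atTop)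
  refine ⟨σ, fun k => ?_⟩
  obtain ⟨N, hagree, hkN⟩ :=
    (MapClusterPt.frequently (F := atTop) (u := σs) hσ (eventually_eqOn_nhds σ k)).and_eventually
      (eventually_ge_atTop k) |>.exists
  have hgeo := sum_Ico_eq_G_of_sum_range_eq_G (hσs N) (Nat.zero_le k) hkN
  rw [← range_eq_Ico, stepPath_zero] at hgeo
  exact sum_range_eq_G_of_eqOn hagree hgeo

end geodesic

/-- Existence of semi-infinite geodesics out of every point. -/
theorem exists_semi_infinite_geodesic (ω : ℤ × ℤ → ℝ) (x : ℤ × ℤ) :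
    ∃ p : ℕ → ℤ × ℤ, p 0 = x ∧
      (∀ i : ℕ, p (i + 1) = p i + (1, 0) ∨ p (i + 1) = p i + (0, 1)) ∧
      ∀ m n : ℕ, m ≤ n → ∑ i ∈ Finset.Ico m n, ω (p i) = G ω (p m) (p n) := by
  obtain ⟨σ, hσ⟩ := exists_forall_sum_range_eq_G ω x
  exact ⟨stepPath x σ, stepPath_zero x σ, stepPath_succ_eq_or x σ,
    fun m n hmn => sum_Ico_eq_G_of_sum_range_eq_G (hσ n) hmn le_rfl⟩
end

section
/- Stability of queues: let {U_n : n ≥ 0} be a stationary ergodic real sequence with E[U_0] < 0, let W_0 ∈ [0,∞) be a random variable, and define W_{n+1} = (W_n + U_n)⁺. Then W_n / n → 0 almost surely as n → ∞. -/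
/-!
Iterating the recursion gives Lindley's bound `W n ≤ W 0 + (S n - S k)` for some `k ≤ n`, where
`S n = ∑_{i<n} U (T^[i] ω)` are the Birkhoff sums of `U`. It therefore suffices that for every
`ε > 0` one has `|S n - n m| ≤ ε n + C` with `m = E[U] ≤ 0`: then `S n - S k ≤ 2 ε n + 2 C`.
This weak form of Birkhoff's theorem follows from Hopf's maximal ergodic inequality
`0 ≤ ∫_{∃ n, 0 < S n} g` applied to `g = U - m - ε` and `g = m - ε - U`: the set where the Birkhoff
sums of `g` are unbounded above is invariant, so by ergodicity it is null or conull, and conull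
would force `0 ≤ ∫ g < 0`.
-/

open MeasureTheory Filter Topology Set

section BirkhoffSum

variable {α : Type*} {f : α → α} {g : α → ℝ}

lemma birkhoffSum_sub_const (c : ℝ) (n : ℕ) (x : α) :
    birkhoffSum f (fun y => g y - c) n x = birkhoffSum f g n x - n * c := by
  simp [birkhoffSum, Finset.sum_sub_distrib]

lemma bddAbove_range_birkhoffSum_apply_iff (x : α) :
    BddAbove (range fun n => birkhoffSum f g n (f x)) ↔
      BddAbove (range fun n => birkhoffSum f g n x) := by
  constructor
  · rintro ⟨C, hC⟩
    refine ⟨max 0 (g x + C), ?_⟩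
    rintro _ ⟨_ | n, rfl⟩
    · simp
    · dsimp only
      rw [birkhoffSum_succ']
      exact le_max_of_le_right (add_le_add_right (hC ⟨n, rfl⟩) _)
  · rintro ⟨C, hC⟩
    refine ⟨C - g x, ?_⟩
    rintro _ ⟨n, rfl⟩
    have := hC ⟨n + 1, rfl⟩
    dsimp only at this ⊢
    rw [birkhoffSum_succ'] at this
    linarith

/-- `maxBirkhoffSum f g N x = max_{1 ≤ k ≤ N + 1} birkhoffSum f g k x`. -/
noncomputable def maxBirkhoffSum (f : α → α) (g : α → ℝ) : ℕ → α → ℝ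
  | 0 => g
  | N + 1 => fun x => g x + max (maxBirkhoffSum f g N (f x)) 0

lemma maxBirkhoffSum_succ (N : ℕ) (x : α) :
    maxBirkhoffSum f g (N + 1) x = g x + max (maxBirkhoffSum f g N (f x)) 0 := rfl

lemma maxBirkhoffSum_le_succ (N : ℕ) (x : α) :
    maxBirkhoffSum f g N x ≤ maxBirkhoffSum f g (N + 1) x := by
  induction N generalizing x with
  | zero => simp [maxBirkhoffSum]
  | succ N ih =>
    rw [maxBirkhoffSum_succ, maxBirkhoffSum_succ]
    gcongr
    exact ih (f x)

lemma monotone_maxBirkhoffSum (x : α) : Monotone fun N => maxBirkhoffSum f g N x :=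
  monotone_nat_of_le_succ fun N => maxBirkhoffSum_le_succ N x

lemma birkhoffSum_succ_le_maxBirkhoffSum (N : ℕ) (x : α) :
    birkhoffSum f g (N + 1) x ≤ maxBirkhoffSum f g N x := by
  induction N generalizing x with
  | zero => simp [maxBirkhoffSum, birkhoffSum_one]
  | succ N ih =>
    rw [birkhoffSum_succ', maxBirkhoffSum_succ]
    gcongr
    exact (ih (f x)).trans (le_max_left _ _)

lemma exists_birkhoffSum_eq_maxBirkhoffSum (N : ℕ) (x : α) :
    ∃ n, birkhoffSum f g n x = maxBirkhoffSum f g N x := by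
  induction N generalizing x with
  | zero => exact ⟨1, birkhoffSum_one f g x⟩
  | succ N ih =>
    obtain ⟨n, hn⟩ := ih (f x)
    rcases le_total (maxBirkhoffSum f g N (f x)) 0 with hneg | hpos
    · exact ⟨1, by rw [birkhoffSum_one, maxBirkhoffSum_succ, max_eq_right hneg, add_zero]⟩
    · exact ⟨n + 1, by rw [birkhoffSum_succ', maxBirkhoffSum_succ, max_eq_left hpos, hn]⟩

lemma exists_birkhoffSum_pos_iff (x : α) :
    (∃ n, 0 < birkhoffSum f g n x) ↔ ∃ N, 0 < maxBirkhoffSum f g N x := by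
  constructor
  · rintro ⟨_ | n, hn⟩
    · simp at hn
    · exact ⟨n, hn.trans_le (birkhoffSum_succ_le_maxBirkhoffSum n x)⟩
  · rintro ⟨N, hN⟩
    obtain ⟨n, hn⟩ := exists_birkhoffSum_eq_maxBirkhoffSum (f := f) (g := g) N x
    exact ⟨n, hn ▸ hN⟩

variable [MeasurableSpace α] {μ : Measure α}

lemma measurable_birkhoffSum (hf : Measurable f) (hg : Measurable g) (n : ℕ) :
    Measurable (birkhoffSum f g n) :=
  Finset.measurable_sum _ fun i _ => hg.comp (hf.iterate i)

lemma measurable_maxBirkhoffSum (hf : Measurable f) (hg : Measurable g) (N : ℕ) :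
    Measurable (maxBirkhoffSum f g N) := by
  induction N with
  | zero => exact hg
  | succ N ih => exact hg.add ((ih.comp hf).max measurable_const)

lemma integrable_maxBirkhoffSum (hf : MeasurePreserving f μ μ) (hg : Integrable g μ) (N : ℕ) :
    Integrable (maxBirkhoffSum f g N) μ := by
  induction N with
  | zero => exact hg
  | succ N ih => exact hg.add ((hf.integrable_comp ih.aestronglyMeasurable).2 ih).pos_part

lemma setIntegral_maxBirkhoffSum_pos_nonneg (hf : MeasurePreserving f μ μ) (hgm : Measurable g)
    (hg : Integrable g μ) (N : ℕ) :
    0 ≤ ∫ x in {x | 0 < maxBirkhoffSum f g N x}, g x ∂μ := by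
  set Φ := maxBirkhoffSum f g N
  set B := {x | 0 < Φ x}
  have hΦm : Measurable Φ := measurable_maxBirkhoffSum hf.measurable hgm N
  have hBm : MeasurableSet B := measurableSet_lt measurable_const hΦm
  have hΦ : Integrable Φ μ := integrable_maxBirkhoffSum hf hg N
  have hΦf : Integrable (fun x => max (Φ (f x)) 0) μ :=
    ((hf.integrable_comp hΦ.aestronglyMeasurable).2 hΦ).pos_part
  -- `∫ F = 0` by invariance, while `F ≤ 0` off `B` and `F ≤ g` on `B` (Garsia's argument).
  set F := fun x => max (Φ x) 0 - max (Φ (f x)) 0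
  have hF : Integrable F μ := hΦ.pos_part.sub hΦf
  have hF_zero : ∫ x, F x ∂μ = 0 := by
    have hcomp : ∫ x, max (Φ (f x)) 0 ∂μ = ∫ x, max (Φ x) 0 ∂μ := by
      rw [← integral_map (f := fun y => max (Φ y) 0) hf.aemeasurable
        (hf.map_eq ▸ (hΦm.max measurable_const).aestronglyMeasurable), hf.map_eq]
    rw [integral_sub hΦ.pos_part hΦf, hcomp, sub_self]
  have hF_compl : ∫ x in Bᶜ, F x ∂μ ≤ 0 := by
    refine setIntegral_nonpos hBm.compl fun x hx => ?_
    have hx : Φ x ≤ 0 := not_lt.1 hx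
    simp only [F, max_eq_right hx]
    linarith [le_max_right (Φ (f x)) 0]
  have hF_le_g : ∫ x in B, F x ∂μ ≤ ∫ x in B, g x ∂μ := by
    refine setIntegral_mono_on hF.integrableOn hg.integrableOn hBm fun x hx => ?_
    have hx : 0 < Φ x := hx
    have := maxBirkhoffSum_le_succ (f := f) (g := g) N x
    rw [maxBirkhoffSum_succ] at this
    simp only [F, max_eq_left hx.le]
    linarith
  linarith [integral_add_compl hBm hF]

lemma setIntegral_exists_birkhoffSum_pos_nonneg (hf : MeasurePreserving f μ μ)
    (hgm : Measurable g) (hg : Integrable g μ) :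
    0 ≤ ∫ x in {x | ∃ n, 0 < birkhoffSum f g n x}, g x ∂μ := by
  have hunion : {x | ∃ n, 0 < birkhoffSum f g n x} = ⋃ N, {x | 0 < maxBirkhoffSum f g N x} := by
    ext x
    simp only [mem_ofPred_eq, mem_iUnion, exists_birkhoffSum_pos_iff]
  rw [hunion]
  exact ge_of_tendsto (tendsto_setIntegral_of_monotone
    (fun N => measurableSet_lt measurable_const (measurable_maxBirkhoffSum hf.measurable hgm N))
    (fun M N hMN x hx => hx.trans_le (monotone_maxBirkhoffSum x hMN)) hg.integrableOn)
    (Eventually.of_forall (setIntegral_maxBirkhoffSum_pos_nonneg hf hgm hg))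

lemma Ergodic.ae_bddAbove_birkhoffSum (hf : Ergodic f μ) (hg : Integrable g μ)
    (hneg : ∫ x, g x ∂μ < 0) :
    ∀ᵐ x ∂μ, BddAbove (range fun n => birkhoffSum f g n x) := by
  wlog hgm : Measurable g generalizing g
  · have hgg : g =ᵐ[μ] hg.1.mk g := hg.1.ae_eq_mk
    have hsum := ae_all_iff.2 fun n =>
      hf.toMeasurePreserving.quasiMeasurePreserving.birkhoffSum_ae_eq_of_ae_eq hgg n
    filter_upwards [this (hg.congr hgg) (by rwa [← integral_congr_ae hgg])
      hg.1.stronglyMeasurable_mk.measurable, hsum] with x hx hx_eq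
    simpa only [hx_eq] using hx
  set A := {x | ¬BddAbove (range fun n => birkhoffSum f g n x)}
  have hAm : MeasurableSet A :=
    (measurableSet_bddAbove_range (measurable_birkhoffSum hf.measurable hgm)).compl
  have hAinv : f ⁻¹' A = A := by
    ext x
    simp only [A, mem_preimage, mem_ofPred_eq, bddAbove_range_birkhoffSum_apply_iff]
  rcases hf.measure_self_or_compl_eq_zero hAm hAinv with hA | hAc
  · filter_upwards [measure_eq_zero_iff_ae_notMem.1 hA] with x hx
    exact not_not.1 hx
  set P := {x | ∃ n, 0 < birkhoffSum f g n x}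
  have hAP : A ⊆ P := fun x hx => by
    obtain ⟨_, ⟨n, rfl⟩, hn⟩ := not_bddAbove_iff.1 hx 0
    exact ⟨n, hn⟩
  have hP : P =ᵐ[μ] (univ : Set α) :=
    ae_eq_univ.2 (measure_mono_null (compl_subset_compl.2 hAP) hAc)
  have hopf := setIntegral_exists_birkhoffSum_pos_nonneg hf.toMeasurePreserving hgm hg
  rw [setIntegral_congr_set hP, setIntegral_univ] at hopf
  linarith

variable [IsProbabilityMeasure μ]

lemma Ergodic.ae_birkhoffSum_le (hf : Ergodic f μ) (hg : Integrable g μ) :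
    ∀ᵐ x ∂μ, ∀ ε > 0, ∃ C, ∀ n, birkhoffSum f g n x ≤ n * (∫ y, g y ∂μ + ε) + C := by
  have hbdd : ∀ k : ℕ, ∀ᵐ x ∂μ, BddAbove (range fun n =>
      birkhoffSum f (fun y => g y - (∫ y, g y ∂μ + 1 / (k + 1))) n x) := fun k =>
    hf.ae_bddAbove_birkhoffSum (hg.sub (integrable_const _)) (by
      rw [integral_sub hg (integrable_const _), integral_const]
      simp only [probReal_univ, one_smul, sub_add_cancel_left, neg_lt_zero]
      positivity)
  filter_upwards [ae_all_iff.2 hbdd] with x hx ε hε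
  obtain ⟨k, hk⟩ := exists_nat_one_div_lt hε
  obtain ⟨C, hC⟩ := hx k
  refine ⟨C, fun n => ?_⟩
  have hn := hC ⟨n, rfl⟩
  dsimp only at hn
  rw [birkhoffSum_sub_const] at hn
  have hslack : (n : ℝ) * (1 / (k + 1)) ≤ n * ε := by gcongr
  linarith

lemma Ergodic.ae_abs_birkhoffSum_sub_le (hf : Ergodic f μ) (hg : Integrable g μ) :
    ∀ᵐ x ∂μ, ∀ ε > 0, ∃ C, ∀ n, |birkhoffSum f g n x - n * ∫ y, g y ∂μ| ≤ ε * n + C := by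
  filter_upwards [hf.ae_birkhoffSum_le hg, hf.ae_birkhoffSum_le hg.neg] with x hup hlow ε hε
  obtain ⟨C, hC⟩ := hup ε hε
  obtain ⟨C', hC'⟩ := hlow ε hε
  refine ⟨max C C', fun n => abs_le.2 ⟨?_, ?_⟩⟩
  · have := hC' n
    simp only [birkhoffSum_neg, Pi.neg_apply, integral_neg] at this
    linarith [le_max_right C C']
  · linarith [hC n, le_max_left C C']

end BirkhoffSum

section MaxRecursion

variable {u w : ℕ → ℝ}

lemma tendsto_div_natCast_zero_of_le_add_mul (hw : ∀ n, 0 ≤ w n)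
    (h : ∀ ε > 0, ∃ C, ∀ n, w n ≤ C + ε * n) :
    Tendsto (fun n => w n / n) atTop (𝓝 0) := by
  refine tendsto_order.2 ⟨fun a ha => Eventually.of_forall fun n => ha.trans_le
    (div_nonneg (hw n) n.cast_nonneg), fun a ha => ?_⟩
  obtain ⟨C, hC⟩ := h (a / 2) (half_pos ha)
  filter_upwards [(tendsto_const_div_atTop_nhds_zero_nat C).eventually (gt_mem_nhds (half_pos ha)),
    eventually_gt_atTop 0] with n hCn hn
  have hn' : (0 : ℝ) < n := Nat.cast_pos.2 hn
  calc w n / n ≤ (C + a / 2 * n) / n := by gcongr; exact hC n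
    _ = C / n + a / 2 := by field_simp
    _ < a := by linarith

lemma exists_le_add_sum_Ico_of_max_recursion (hw0 : 0 ≤ w 0)
    (hrec : ∀ n, w (n + 1) = max (w n + u n) 0) (n : ℕ) :
    ∃ k ≤ n, w n ≤ w 0 + ∑ i ∈ Finset.Ico k n, u i := by
  induction n with
  | zero => exact ⟨0, le_rfl, by simp⟩
  | succ n ih =>
    obtain ⟨k, hkn, hk⟩ := ih
    rcases le_total (w n + u n) 0 with hneg | hpos
    · exact ⟨n + 1, le_rfl, by simp [hrec, max_eq_right hneg, hw0]⟩
    · refine ⟨k, hkn.trans n.le_succ, ?_⟩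
      rw [hrec, max_eq_left hpos, Finset.sum_Ico_succ_top hkn]
      linarith

lemma tendsto_div_natCast_zero_of_max_recursion {m : ℝ} (hm : m ≤ 0) (hw0 : 0 ≤ w 0)
    (hrec : ∀ n, w (n + 1) = max (w n + u n) 0)
    (hu : ∀ ε > 0, ∃ C, ∀ n, |∑ i ∈ Finset.range n, u i - n * m| ≤ ε * n + C) :
    Tendsto (fun n => w n / n) atTop (𝓝 0) := by
  have hw : ∀ n, 0 ≤ w n := by
    rintro (_ | n)
    · exact hw0
    · exact (hrec n).symm ▸ le_max_right _ _
  refine tendsto_div_natCast_zero_of_le_add_mul hw fun ε hε => ?_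
  obtain ⟨C, hC⟩ := hu (ε / 2) (half_pos hε)
  refine ⟨w 0 + 2 * C, fun n => ?_⟩
  obtain ⟨k, hkn, hwn⟩ := exists_le_add_sum_Ico_of_max_recursion hw0 hrec n
  rw [Finset.sum_Ico_eq_sub _ hkn] at hwn
  have hkn' : (k : ℝ) ≤ n := Nat.cast_le.2 hkn
  have hdrift : (n - k) * m ≤ 0 := mul_nonpos_of_nonneg_of_nonpos (sub_nonneg.2 hkn') hm
  have hslack : ε / 2 * k ≤ ε / 2 * n := by gcongr
  linarith [(abs_le.1 (hC n)).2, (abs_le.1 (hC k)).1]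

end MaxRecursion

/-- Stability of queues: for a stationary ergodic driving sequence with negative
mean, the waiting times satisfy `W n / n → 0` almost surely. -/
theorem queue_stability {Ω : Type*} [MeasurableSpace Ω] (μ : Measure Ω)
    [IsProbabilityMeasure μ] (T : Ω → Ω) (hT : Ergodic T μ)
    (U : Ω → ℝ) (hU : Integrable U μ) (hmean : ∫ ω, U ω ∂μ < 0)
    (W : ℕ → Ω → ℝ) (hW0 : ∀ ω, 0 ≤ W 0 ω)
    (hWrec : ∀ n ω, W (n + 1) ω = max (W n ω + U (T^[n] ω)) 0) :
    ∀ᵐ ω ∂μ, Tendsto (fun n : ℕ => W n ω / n) atTop (nhds 0) := by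
  filter_upwards [hT.ae_abs_birkhoffSum_sub_le hU] with ω hω
  exact tendsto_div_natCast_zero_of_max_recursion hmean.le (hW0 ω) (fun n => hWrec n ω) hω
end

section
/- Let g : ℝ₊² → ℝ be concave, positively 1-homogeneous, and differentiable at ξ ∈ (0,∞)². If ζ ∈ ℝ₊² satisfies g(ζ) = ζ · ∇g(ξ), then g is affine on the segment joining ξ and ζ: g(tξ + (1−t)ζ) = t·g(ξ) + (1−t)·g(ζ) for all t ∈ [0,1]. -/
/-!
By the Euler relation, the tangent plane of `g` at `ξ` is the linear map `L = Dg(ξ)` itself, and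
concavity puts `g` below it on the quadrant. The hypothesis says that `g` touches `L` at `ζ` as
well, so on the segment from `ξ` to `ζ` the concave function `g` is squeezed between its chord
and the linear function `L`, which agree there.
-/

open Filter Topology

theorem ConcaveOn.eq_of_le_linearMap {𝕜 E β : Type*} [Semiring 𝕜] [PartialOrder 𝕜]
    [AddCommMonoid E] [Module 𝕜 E] [AddCommMonoid β] [PartialOrder β] [Module 𝕜 β]
    {s : Set E} {f : E → β} (hf : ConcaveOn 𝕜 s f) (L : E →ₗ[𝕜] β) (hle : ∀ z ∈ s, f z ≤ L z)
    {x y : E} (hx : x ∈ s) (hy : y ∈ s) (hfx : f x = L x) (hfy : f y = L y)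
    {a b : 𝕜} (ha : 0 ≤ a) (hb : 0 ≤ b) (hab : a + b = 1) :
    f (a • x + b • y) = a • f x + b • f y := by
  refine le_antisymm ?_ (hf.2 hx hy ha hb hab)
  calc f (a • x + b • y) ≤ L (a • x + b • y) := hle _ (hf.1 hx hy ha hb hab)
    _ = a • f x + b • f y := by rw [map_add, map_smul, map_smul, hfx, hfy]

section Calculus

variable {E F : Type*} [NormedAddCommGroup E] [NormedSpace ℝ E]
  [NormedAddCommGroup F] [NormedSpace ℝ F]

theorem HasFDerivAt.apply_self_eq_of_homogeneous {f : E → F} {f' : E →L[ℝ] F} {x : E}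
    (hf : HasFDerivAt f f' x) (hhom : (fun t : ℝ => f (t • x)) =ᶠ[𝓝 1] fun t => t • f x) :
    f' x = f x := by
  have hray : HasDerivAt (fun t : ℝ => f (t • x)) (f' x) 1 := by
    refine HasFDerivAt.comp_hasDerivAt (f := fun t : ℝ => t • x) 1 ?_ ?_
    · rwa [one_smul]
    · simpa using (hasDerivAt_id (1 : ℝ)).smul_const x
  have hlin : HasDerivAt (fun t : ℝ => t • f x) (f x) 1 := by
    simpa using (hasDerivAt_id (1 : ℝ)).smul_const (f x)
  exact (hray.congr_of_eventuallyEq hhom.symm).unique hlin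

theorem ConcaveOn.le_add_of_hasFDerivAt {s : Set E} {f : E → ℝ} {f' : E →L[ℝ] ℝ} {x y : E}
    (hf : ConcaveOn ℝ s f) (hx : x ∈ s) (hy : y ∈ s) (hf' : HasFDerivAt f f' x) :
    f y ≤ f x + f' (y - x) := by
  set φ := f ∘ AffineMap.lineMap (k := ℝ) x y
  have hφ : ConcaveOn ℝ (AffineMap.lineMap x y ⁻¹' s) φ := hf.comp_affineMap _
  have hφ' : HasDerivAt φ (f' (y - x)) 0 := by
    refine HasFDerivAt.comp_hasDerivAt (0 : ℝ) ?_ AffineMap.hasDerivAt_lineMap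
    rwa [AffineMap.lineMap_apply_zero]
  have hslope := hφ.slope_le_of_hasDerivAt (by simpa using hx) (by simpa using hy) one_pos hφ'
  simp only [slope, φ, Function.comp_apply, AffineMap.lineMap_apply_zero,
    AffineMap.lineMap_apply_one, vsub_eq_sub, sub_zero, inv_one, one_smul] at hslope
  linarith

end Calculus

/-- If `g` is concave, 1-homogeneous, differentiable at `ξ`, and
`g(ζ) = ζ · ∇g(ξ)`, then `g` is affine on the segment from `ξ` to `ζ`. -/
theorem affine_on_segment (g : ℝ × ℝ → ℝ)
    (hconc : ConcaveOn ℝ {p : ℝ × ℝ | 0 ≤ p.1 ∧ 0 ≤ p.2} g)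
    (hhom : ∀ t : ℝ, 0 < t → ∀ p : ℝ × ℝ, 0 ≤ p.1 → 0 ≤ p.2 → g (t • p) = t * g p)
    (ξ : ℝ × ℝ) (hξ1 : 0 < ξ.1) (hξ2 : 0 < ξ.2) (hdiff : DifferentiableAt ℝ g ξ)
    (ζ : ℝ × ℝ) (hζ1 : 0 ≤ ζ.1) (hζ2 : 0 ≤ ζ.2)
    (hζ : g ζ = fderiv ℝ g ξ ζ) :
    ∀ t : ℝ, 0 ≤ t → t ≤ 1 →
      g (t • ξ + (1 - t) • ζ) = t * g ξ + (1 - t) * g ζ := by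
  intro t ht0 ht1
  set L := fderiv ℝ g ξ
  have hξ : ξ ∈ {p : ℝ × ℝ | 0 ≤ p.1 ∧ 0 ≤ p.2} := ⟨hξ1.le, hξ2.le⟩
  have euler : L ξ = g ξ :=
    hdiff.hasFDerivAt.apply_self_eq_of_homogeneous <| by
      filter_upwards [eventually_gt_nhds one_pos] with s hs
      exact hhom s hs ξ hξ1.le hξ2.le
  have tangent_ge : ∀ z ∈ {p : ℝ × ℝ | 0 ≤ p.1 ∧ 0 ≤ p.2}, g z ≤ L z := fun z hz => by
    have := hconc.le_add_of_hasFDerivAt hξ hz hdiff.hasFDerivAt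
    rwa [map_sub, euler, add_sub_cancel] at this
  simpa only [smul_eq_mul] using
    hconc.eq_of_le_linearMap L.toLinearMap tangent_ge hξ ⟨hζ1, hζ2⟩ euler.symm hζ ht0
      (sub_nonneg.2 ht1) (add_sub_cancel t 1)
end
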